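/- arXiv:2310.06243 — 3 statements merged into one kernel-verified Lean document; each statement's English description precedes it below -/
import Mathlib

section
/- Let x_1, ..., x_K ∈ R^d be vectors and ε > 0. Define Λ_k = ε I + ∑_{j=1}^{k-1} x_j x_j^T. Then ∑_{k=1}^K min{1, ‖x_k‖²_{Λ_k^{-1}}} ≤ 2 log det(I + (1/ε) ∑_{k=1}^K x_k x_k^T), where ‖x‖²_A = x^T A x. -/
open Matrix

lemma min_le_two_log (u : ℝ) (hu : 0 ≤ u) : min 1 u ≤ 2 * Real.log (1 + u) := by
  rcases le_total u 1 with h | h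
  · rw [min_eq_right h]
    have h1 : (0:ℝ) < 1 + u := by linarith
    have h3 := Real.one_sub_inv_le_log_of_pos h1
    have h2 : 1 - (1+u)⁻¹ = u / (1+u) := by field_simp; ring
    rw [h2] at h3
    have h4 : u / 2 ≤ u / (1+u) := div_le_div_of_nonneg_left hu h1 (by linarith)
    linarith
  · rw [min_eq_left h]
    have h2 : Real.log 2 ≤ Real.log (1 + u) := by
      apply Real.log_le_log (by norm_num); linarith
    nlinarith [Real.log_two_gt_d9]

lemma smul_one_posDef {d : ℕ} {ε : ℝ} (hε : 0 < ε) :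
    (ε • (1 : Matrix (Fin d) (Fin d) ℝ)).PosDef := by
  refine PosDef.of_dotProduct_mulVec_pos ?_ ?_
  · show _ᴴ = _
    simp [conjTranspose_smul]
  · intro v hv
    simp only [smul_mulVec, one_mulVec, dotProduct_smul, star_trivial]
    have : 0 < v ⬝ᵥ v := by
      have := Matrix.dotProduct_star_self_pos_iff (v := v) |>.mpr hv
      simpa using this
    positivity

lemma vecMulVec_posSemidef {d : ℕ} (v : Fin d → ℝ) : (vecMulVec v v).PosSemidef := by
  have h : vecMulVec v v = (replicateRow Unit v)ᴴ * replicateRow Unit v := by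
    ext i j; simp [vecMulVec, conjTranspose_apply, replicateRow, Matrix.mul_apply]
  rw [h]
  exact posSemidef_conjTranspose_mul_self _

lemma det_lemma {d : ℕ} (M : Matrix (Fin d) (Fin d) ℝ) (hM : M.PosDef) (v : Fin d → ℝ) :
    (M + vecMulVec v v).det = M.det * (1 + v ⬝ᵥ M⁻¹ *ᵥ v) := by
  rw [vecMulVec_eq Unit, det_add_replicateCol_mul_replicateRow hM.det_pos.ne'.isUnit]
  congr 1
  rw [det_unique]
  simp only [Matrix.add_apply, one_apply_eq]
  congr 1
  rw [← replicateRow_vecMul, replicateRow_mul_replicateCol_apply, ← dotProduct_mulVec]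

/-- Elliptical potential lemma: with `Λ_k = ε I + ∑_{j<k} x_j x_jᵀ`,
`∑_k min {1, x_kᵀ Λ_k⁻¹ x_k} ≤ 2 log det (I + ε⁻¹ ∑_k x_k x_kᵀ)`. -/
theorem stmt_2 (d K : ℕ) (ε : ℝ) (hε : 0 < ε) (x : Fin K → Fin d → ℝ) :
    (∑ k : Fin K,
        min 1 (x k ⬝ᵥ ((ε • (1 : Matrix (Fin d) (Fin d) ℝ)
          + ∑ j ∈ Finset.univ.filter (fun j : Fin K => j < k),
              vecMulVec (x j) (x j))⁻¹ *ᵥ x k)))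
      ≤ 2 * Real.log
          (Matrix.det ((1 : Matrix (Fin d) (Fin d) ℝ)
            + ε⁻¹ • ∑ k : Fin K, vecMulVec (x k) (x k))) := by
  set S : ℕ → Matrix (Fin d) (Fin d) ℝ := fun n =>
    ε • (1 : Matrix (Fin d) (Fin d) ℝ)
      + ∑ j ∈ Finset.univ.filter (fun j : Fin K => (j : ℕ) < n), vecMulVec (x j) (x j)
    with hS
  have hPD : ∀ n, (S n).PosDef := by
    intro n
    refine (smul_one_posDef hε).add_posSemidef ?_
    refine Finset.sum_induction _ _ (fun a b ha hb => ha.add hb) ?_ ?_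
    · exact PosSemidef.zero
    · exact fun j _ => vecMulVec_posSemidef (x j)
  have hdetpos : ∀ n, 0 < (S n).det := fun n => (hPD n).det_pos
  set u : Fin K → ℝ := fun k => x k ⬝ᵥ (S k)⁻¹ *ᵥ x k with hu
  have hu0 : ∀ k, 0 ≤ u k := by
    intro k
    have := ((hPD k).inv.posSemidef).dotProduct_mulVec_nonneg (x k)
    simpa using this
  have hstep : ∀ k : Fin K, S ((k : ℕ) + 1) = S k + vecMulVec (x k) (x k) := by
    intro k
    have hset : Finset.univ.filter (fun j : Fin K => (j : ℕ) < (k : ℕ) + 1)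
        = insert k (Finset.univ.filter (fun j : Fin K => (j : ℕ) < (k : ℕ))) := by
      ext j
      simp [Nat.lt_succ_iff, le_iff_lt_or_eq, Fin.ext_iff, or_comm]
    have hnot : k ∉ Finset.univ.filter (fun j : Fin K => (j : ℕ) < (k : ℕ)) := by simp
    rw [hS]
    simp only [hset, Finset.sum_insert hnot]
    abel
  have hdet : ∀ k : Fin K, (S ((k : ℕ) + 1)).det = (S k).det * (1 + u k) := by
    intro k
    rw [hstep k]
    exact det_lemma _ (hPD k) (x k)
  set g : ℕ → ℝ := fun n => Real.log (S n).det with hg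
  have hlog : ∀ k : Fin K, Real.log (1 + u k) = g ((k : ℕ) + 1) - g k := by
    intro k
    rw [hg]
    simp only
    rw [hdet k, Real.log_mul (hdetpos k).ne' (by nlinarith [hu0 k])]
    ring
  -- the LHS matches (S k)
  have hmatch : ∀ k : Fin K,
      (ε • (1 : Matrix (Fin d) (Fin d) ℝ)
          + ∑ j ∈ Finset.univ.filter (fun j : Fin K => j < k),
              vecMulVec (x j) (x j)) = S (k : ℕ) := by
    intro k
    rw [hS]
    congr 1
  calc (∑ k : Fin K,
        min 1 (x k ⬝ᵥ ((ε • (1 : Matrix (Fin d) (Fin d) ℝ)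
          + ∑ j ∈ Finset.univ.filter (fun j : Fin K => j < k),
              vecMulVec (x j) (x j))⁻¹ *ᵥ x k)))
      = ∑ k : Fin K, min 1 (u k) := by
        refine Finset.sum_congr rfl fun k _ => ?_
        rw [hmatch k]
    _ ≤ ∑ k : Fin K, 2 * Real.log (1 + u k) :=
        Finset.sum_le_sum fun k _ => min_le_two_log (u k) (hu0 k)
    _ = 2 * ∑ k : Fin K, (g ((k : ℕ) + 1) - g k) := by
        rw [Finset.mul_sum]
        exact Finset.sum_congr rfl fun k _ => by rw [hlog k]
    _ = 2 * (g K - g 0) := by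
        congr 1
        rw [Fin.sum_univ_eq_sum_range (fun i => g (i + 1) - g i) K]
        exact Finset.sum_range_sub g K
    _ = 2 * Real.log
          (Matrix.det ((1 : Matrix (Fin d) (Fin d) ℝ)
            + ε⁻¹ • ∑ k : Fin K, vecMulVec (x k) (x k))) := by
        congr 1
        have h1 : (1 : Matrix (Fin d) (Fin d) ℝ)
            + ε⁻¹ • ∑ k : Fin K, vecMulVec (x k) (x k) = ε⁻¹ • S K := by
          rw [hS]
          simp only
          have : Finset.univ.filter (fun j : Fin K => (j : ℕ) < K) = Finset.univ := by
            ext j; simp [j.isLt]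
          rw [this, smul_add, smul_smul, inv_mul_cancel₀ hε.ne', one_smul]
        have h0 : S 0 = ε • (1 : Matrix (Fin d) (Fin d) ℝ) := by
          rw [hS]; simp
        rw [h1, det_smul, Real.log_mul (by positivity) (hdetpos K).ne', hg]
        simp only
        rw [h0, det_smul, det_one, mul_one, Real.log_pow, Real.log_pow, Real.log_inv]
        ring
end

section
/- Fix ε > 0 and a function class G on X with distributional eluder dimension d = dim_DE(G, D, ε). Suppose e_1, ..., e_K ≥ 0 are numbers and ρ_1, ..., ρ_K ∈ D are distributions such that e_k > ε for all k, and whenever sqrt(∑_{s ∈ S} e_s²) < e_k for a subset S ⊆ {1,...,k-1}, the measure ρ_k is (e_k − c)-independent of {ρ_s : s ∈ S} for small enough c > 0. Then when the e_k's are distributed into buckets by the greedy rule (add e_k to the first bucket B_i with ∑_{s ∈ B_i, s < k} e_s² < e_k²), every bucket has size at most d. -/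
open MeasureTheory

section

variable {X : Type*} [MeasurableSpace X]

/-- `ν` is `ε`-independent of the family `{ρ s : s ∈ S}` with respect to `G`:
there is `g ∈ G` with `√(∑_{s ∈ S} (E_{ρ s}[g])²) ≤ ε` and `|E_ν[g]| > ε`. -/
def EpsIndepFinset {K : ℕ} (G : Set (X → ℝ)) (ε : ℝ) (ρ : Fin K → Measure X)
    (S : Finset (Fin K)) (ν : Measure X) : Prop :=
  ∃ g ∈ G, Real.sqrt (∑ s ∈ S, (∫ x, g x ∂(ρ s)) ^ 2) ≤ ε ∧ ε < |∫ x, g x ∂ν|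

/-- `ν` is `ε`-independent of `μ 0, …, μ (n-1)` with respect to `G`. -/
def EpsIndepMeas (G : Set (X → ℝ)) (ε : ℝ) {n : ℕ} (μs : Fin n → Measure X)
    (ν : Measure X) : Prop :=
  ∃ g ∈ G, Real.sqrt (∑ i, (∫ x, g x ∂(μs i)) ^ 2) ≤ ε ∧ ε < |∫ x, g x ∂ν|

/-- Distributional eluder dimension `dim_DE(G, D, ε)`: the length of the longest
sequence in `D` each element of which is `ε'`-independent of its predecessors with
respect to `G`, for some `ε' ≥ ε`. -/
noncomputable def dimDE (G : Set (X → ℝ)) (D : Set (Measure X)) (ε : ℝ) : ℕ∞ :=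
  ⨆ (n : ℕ) (_ : ∃ ρ : Fin n → Measure X, (∀ i, ρ i ∈ D) ∧
      ∀ i : Fin n, ∃ ε' ≥ ε,
        EpsIndepMeas G ε' (fun j : Fin (i : ℕ) => ρ ⟨(j : ℕ), j.2.trans i.2⟩) (ρ i)),
    (n : ℕ∞)

/-- Bucketing/pigeonhole argument: suppose `e_1, …, e_K ≥ 0` and `ρ_1, …, ρ_K ∈ D`
satisfy `e_k > ε` for all `k`, and whenever `√(∑_{s ∈ S} e_s²) < e_k` for a subset
`S ⊆ {1, …, k−1}`, the measure `ρ_k` is `(e_k − c)`-independent of `{ρ_s : s ∈ S}`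
for all small enough `c > 0`.  If `b` assigns each index `k` to a bucket by the
greedy rule (put `e_k` into the first bucket `B_i` with
`∑_{s ∈ B_i, s < k} e_s² < e_k²`), then every bucket has size at most
`d = dim_DE(G, D, ε)`. -/
theorem stmt_13 (ε : ℝ) (hε : 0 < ε) (G : Set (X → ℝ)) (D : Set (Measure X))
    (K : ℕ) (e : Fin K → ℝ) (ρ : Fin K → Measure X)
    (hρD : ∀ k, ρ k ∈ D)
    (he0 : ∀ k, 0 ≤ e k) (heε : ∀ k, ε < e k)
    (hindep : ∀ k : Fin K, ∀ S : Finset (Fin K), (∀ s ∈ S, s < k) →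
      Real.sqrt (∑ s ∈ S, (e s) ^ 2) < e k →
      ∃ c₀ > 0, ∀ c, 0 < c → c < c₀ → EpsIndepFinset G (e k - c) ρ S (ρ k))
    (b : Fin K → ℕ)
    (hgreedy : ∀ k : Fin K,
      (∑ s ∈ Finset.univ.filter (fun s : Fin K => s < k ∧ b s = b k), (e s) ^ 2)
          < (e k) ^ 2 ∧
        ∀ i < b k,
          (e k) ^ 2 ≤ ∑ s ∈ Finset.univ.filter (fun s : Fin K => s < k ∧ b s = i),
            (e s) ^ 2) :
    ∀ i : ℕ,
      ((Finset.univ.filter (fun k : Fin K => b k = i)).card : ℕ∞) ≤ dimDE G D ε := by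
  intro i
  classical
  set T := Finset.univ.filter (fun k : Fin K => b k = i) with hTdef
  set f := T.orderIsoOfFin rfl with hf
  rw [dimDE]
  refine le_iSup₂_of_le T.card ?_ le_rfl
  refine ⟨fun j => ρ (f j), fun j => hρD _, ?_⟩
  intro j
  set k : Fin K := (f j : Fin K) with hk
  have hkT : k ∈ T := (f j).2
  have hbk : b k = i := by simpa [hTdef] using hkT
  set S : Finset (Fin K) := Finset.univ.filter (fun s => s < k ∧ b s = b k) with hS
  have hSlt : ∀ s ∈ S, s < k := fun s hs => (Finset.mem_filter.mp hs).2.1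
  have hsumlt : Real.sqrt (∑ s ∈ S, (e s) ^ 2) < e k := by
    have h1 := (hgreedy k).1
    have h2 := Real.sqrt_lt_sqrt (Finset.sum_nonneg fun s _ => sq_nonneg _) h1
    rwa [Real.sqrt_sq (he0 k)] at h2
  obtain ⟨c₀, hc₀, hcc⟩ := hindep k S hSlt hsumlt
  have hekε : 0 < e k - ε := by linarith [heε k]
  have hmin : 0 < min c₀ (e k - ε) := lt_min hc₀ hekε
  set c := min c₀ (e k - ε) / 2 with hc
  have hcpos : 0 < c := by positivity
  have hclt : c < c₀ := by
    have := min_le_left c₀ (e k - ε); rw [hc]; linarith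
  have hcε : ε ≤ e k - c := by
    have := min_le_right c₀ (e k - ε); rw [hc]; linarith
  obtain ⟨g, hgG, hg1, hg2⟩ := hcc c hcpos hclt
  refine ⟨e k - c, hcε, g, hgG, ?_, hg2⟩
  have hmemT : ∀ {s : Fin K}, s ∈ S → s ∈ T := fun {s} hs =>
    Finset.mem_filter.mpr ⟨Finset.mem_univ _, by
      rw [(Finset.mem_filter.mp hs).2.2, hbk]⟩
  have hlt : ∀ (s : Fin K) (hs : s ∈ S),
      ((f.symm ⟨s, hmemT hs⟩ : Fin T.card) : ℕ) < (j : ℕ) := by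
    intro s hs
    have h1 : (⟨s, hmemT hs⟩ : T) < f j := by
      rw [← Subtype.coe_lt_coe]
      exact hSlt s hs
    have h2 : f.symm ⟨s, hmemT hs⟩ < j := by
      have := f.symm.lt_iff_lt.mpr h1
      simpa using this
    exact h2
  have hsum_eq : ∑ m : Fin (j : ℕ), (∫ x, g x ∂(ρ ((f ⟨(m : ℕ), m.2.trans j.2⟩ : T) : Fin K))) ^ 2
      = ∑ s ∈ S, (∫ x, g x ∂(ρ s)) ^ 2 := by
    refine Finset.sum_bij' (fun m _ => ((f ⟨(m : ℕ), m.2.trans j.2⟩ : T) : Fin K))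
      (fun s hs => ⟨((f.symm ⟨s, hmemT hs⟩ : Fin T.card) : ℕ), hlt s hs⟩)
      ?_ ?_ ?_ ?_ ?_
    · intro m _
      refine Finset.mem_filter.mpr ⟨Finset.mem_univ _, ?_, ?_⟩
      · show ((f ⟨(m : ℕ), m.2.trans j.2⟩ : T) : Fin K) < k
        exact Subtype.coe_lt_coe.mpr (f.lt_iff_lt.mpr (by exact m.2))
      · show b ((f ⟨(m : ℕ), m.2.trans j.2⟩ : T) : Fin K) = b k
        rw [hbk]
        exact (Finset.mem_filter.mp (f ⟨(m : ℕ), m.2.trans j.2⟩).2).2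
    · intro s hs
      exact Finset.mem_univ _
    · intro m _
      apply Fin.ext
      simp
    · intro s hs
      simp
    · intro m _
      rfl
  simpa [hsum_eq] using hg1

end
end

section
/- Let d ≥ 1, ε > 0, K ≥ 1, and x_1,…,x_K ∈ R^d with ‖x_k‖₂ ≤ 1 for all k. Define D(ε) = 2d log((ε + K)/ε) and Σ_k = ε I + ∑_{s=1}^{k-1} x_s x_s^T. Then ∑_{k=1}^K min{1, ‖x_k‖²_{Σ_k^{-1}}} ≤ D(ε). -/
open Matrix

namespace EPLaux

variable {d K : ℕ}

lemma min_one_le_two_log (q : ℝ) (hq : 0 ≤ q) : min 1 q ≤ 2 * Real.log (1 + q) := by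
  have h1 : (0:ℝ) < 1 + q := by linarith
  have hlog : 1 - (1 + q)⁻¹ ≤ Real.log (1 + q) := Real.one_sub_inv_le_log_of_pos h1
  have hinv : (1 + q) * (1 + q)⁻¹ = 1 := mul_inv_cancel₀ h1.ne'
  have hinv0 : 0 < (1 + q)⁻¹ := inv_pos.mpr h1
  rcases le_total q 1 with h | h
  · rw [min_eq_right h]
    nlinarith [mul_nonneg hq (sub_nonneg.mpr h)]
  · rw [min_eq_left h]
    nlinarith

lemma psd_vmv (v : Fin d → ℝ) : (vecMulVec v v).PosSemidef := by
  have h : vecMulVec v v = replicateCol Unit v * (replicateCol Unit v)ᴴ := by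
    rw [vecMulVec_eq Unit]
    congr 1
  rw [h]
  exact posSemidef_self_mul_conjTranspose _

lemma vmv_mulVec (v y : Fin d → ℝ) : vecMulVec v v *ᵥ y = (v ⬝ᵥ y) • v := by
  ext i
  simp only [mulVec, vecMulVec_apply, dotProduct, Pi.smul_apply, smul_eq_mul]
  rw [Finset.sum_mul]
  exact Finset.sum_congr rfl fun j _ => by ring

lemma sum_mulVec' {ι : Type*} (T : Finset ι) (f : ι → Matrix (Fin d) (Fin d) ℝ)
    (v : Fin d → ℝ) : (∑ s ∈ T, f s) *ᵥ v = ∑ s ∈ T, f s *ᵥ v := by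
  classical
  induction T using Finset.induction_on with
  | empty => simp
  | insert _ _ h ih => rw [Finset.sum_insert h, Finset.sum_insert h, add_mulVec, ih]

lemma dotProduct_sum' {ι : Type*} (T : Finset ι) (v : Fin d → ℝ) (w : ι → Fin d → ℝ) :
    v ⬝ᵥ (∑ s ∈ T, w s) = ∑ s ∈ T, v ⬝ᵥ w s := by
  classical
  induction T using Finset.induction_on with
  | empty => simp
  | insert _ _ h ih => rw [Finset.sum_insert h, Finset.sum_insert h, dotProduct_add, ih]

noncomputable def Mmat (ε : ℝ) (x : Fin K → Fin d → ℝ) (n : ℕ) :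
    Matrix (Fin d) (Fin d) ℝ :=
  ε • 1 + ∑ s ∈ Finset.univ.filter (fun s : Fin K => (s : ℕ) < n), vecMulVec (x s) (x s)

lemma Mmat_posDef (ε : ℝ) (hε : 0 < ε) (x : Fin K → Fin d → ℝ) (n : ℕ) :
    (Mmat ε x n).PosDef := by
  unfold Mmat
  apply Matrix.PosDef.add_posSemidef
  · rw [smul_one_eq_diagonal]
    exact PosDef.diagonal fun _ => hε
  · exact Finset.sum_induction _ _ (fun a b ha hb => ha.add hb) PosSemidef.zero
      (fun s _ => psd_vmv (x s))

lemma q_nonneg (ε : ℝ) (hε : 0 < ε) (x : Fin K → Fin d → ℝ) (k : Fin K) :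
    0 ≤ x k ⬝ᵥ (Mmat ε x (k : ℕ))⁻¹ *ᵥ x k := by
  have h := ((Mmat_posDef ε hε x (k : ℕ)).inv).posSemidef.dotProduct_mulVec_nonneg (x k)
  simpa using h

lemma filter_succ (k : Fin K) :
    Finset.univ.filter (fun s : Fin K => (s : ℕ) < (k : ℕ) + 1)
      = insert k (Finset.univ.filter (fun s : Fin K => (s : ℕ) < (k : ℕ))) := by
  ext s
  simp only [Finset.mem_filter, Finset.mem_univ, true_and, Finset.mem_insert, Fin.ext_iff]
  omega

lemma Mmat_succ (ε : ℝ) (x : Fin K → Fin d → ℝ) (k : Fin K) :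
    Mmat ε x ((k : ℕ) + 1) = Mmat ε x (k : ℕ) + vecMulVec (x k) (x k) := by
  unfold Mmat
  rw [filter_succ, Finset.sum_insert (by simp)]
  abel

lemma det_Mmat_succ (ε : ℝ) (hε : 0 < ε) (x : Fin K → Fin d → ℝ) (k : Fin K) :
    (Mmat ε x ((k : ℕ) + 1)).det
      = (Mmat ε x (k : ℕ)).det * (1 + x k ⬝ᵥ (Mmat ε x (k : ℕ))⁻¹ *ᵥ x k) := by
  have hA : (Mmat ε x (k : ℕ)).PosDef := Mmat_posDef ε hε x _
  rw [Mmat_succ, vecMulVec_eq Unit,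
    det_add_replicateCol_mul_replicateRow (isUnit_iff_ne_zero.mpr hA.det_pos.ne') (x k) (x k)]
  congr 1
  rw [det_unique, Matrix.add_apply, one_apply_eq]
  congr 1
  simp only [mul_apply, replicateRow_apply, replicateCol_apply, dotProduct, mulVec, Finset.sum_mul,
    Finset.mul_sum]
  rw [Finset.sum_comm]
  exact Finset.sum_congr rfl fun i _ => Finset.sum_congr rfl fun j _ => by ring

lemma log_det_Mmat (ε : ℝ) (hε : 0 < ε) (x : Fin K → Fin d → ℝ) :
    ∀ n, n ≤ K → Real.log (Mmat ε x n).det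
      = d * Real.log ε + ∑ s ∈ Finset.univ.filter (fun s : Fin K => (s : ℕ) < n),
          Real.log (1 + x s ⬝ᵥ (Mmat ε x (s : ℕ))⁻¹ *ᵥ x s) := by
  intro n
  induction n with
  | zero =>
    intro _
    have h0 : Mmat ε x 0 = (ε • 1 : Matrix (Fin d) (Fin d) ℝ) := by unfold Mmat; simp
    rw [h0, smul_one_eq_diagonal, det_diagonal, Finset.prod_const, Finset.card_univ,
      Fintype.card_fin, Real.log_pow]
    simp
  | succ n ih =>
    intro hn
    have hnK : n < K := hn
    have hq : 0 ≤ x ⟨n, hnK⟩ ⬝ᵥ (Mmat ε x n)⁻¹ *ᵥ x ⟨n, hnK⟩ :=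
      q_nonneg ε hε x ⟨n, hnK⟩
    have hdet := det_Mmat_succ ε hε x ⟨n, hnK⟩
    have hins := filter_succ (K := K) ⟨n, hnK⟩
    rw [show n + 1 = ((⟨n, hnK⟩ : Fin K) : ℕ) + 1 from rfl, hdet,
      Real.log_mul (Mmat_posDef ε hε x _).det_pos.ne' (by positivity),
      ih (le_of_lt hnK), hins, Finset.sum_insert (by simp)]
    ring

lemma det_Mmat_le (ε : ℝ) (hε : 0 < ε) (x : Fin K → Fin d → ℝ)
    (hx : ∀ k, ∑ j, (x k j) ^ 2 ≤ 1) :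
    (Mmat ε x K).det ≤ (ε + K) ^ d := by
  have hpd := Mmat_posDef ε hε x K
  have hH := hpd.isHermitian
  have hle : ∀ i, hH.eigenvalues i ≤ ε + K := by
    intro i
    set v : Fin d → ℝ := ⇑(hH.eigenvectorBasis i) with hv
    have hv1 : v ⬝ᵥ v = 1 := by
      have h2 : (inner ℝ (hH.eigenvectorBasis i) (hH.eigenvectorBasis i) : ℝ) = 1 := by
        have := orthonormal_iff_ite.mp hH.eigenvectorBasis.orthonormal i i
        simpa using this
      rw [EuclideanSpace.inner_eq_star_dotProduct] at h2
      simpa [hv] using h2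
    have heig : Mmat ε x K *ᵥ v = hH.eigenvalues i • v := hH.mulVec_eigenvectorBasis i
    have hquad : v ⬝ᵥ (Mmat ε x K *ᵥ v) = hH.eigenvalues i := by
      rw [heig, dotProduct_smul, smul_eq_mul, hv1, mul_one]
    have hfilter : Finset.univ.filter (fun s : Fin K => (s : ℕ) < K) = Finset.univ :=
      Finset.filter_true_of_mem fun s _ => s.isLt
    have hexp : v ⬝ᵥ (Mmat ε x K *ᵥ v)
        = ε * (v ⬝ᵥ v) + ∑ s : Fin K, (x s ⬝ᵥ v) ^ 2 := by
      unfold Mmat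
      rw [hfilter, add_mulVec, smul_mulVec, one_mulVec, dotProduct_add,
        dotProduct_smul, smul_eq_mul, sum_mulVec', dotProduct_sum']
      congr 1
      refine Finset.sum_congr rfl fun s _ => ?_
      rw [vmv_mulVec, dotProduct_smul, smul_eq_mul, dotProduct_comm v (x s), sq]
    have hCS : ∀ s : Fin K, (x s ⬝ᵥ v) ^ 2 ≤ 1 := by
      intro s
      have h1 := Finset.sum_mul_sq_le_sq_mul_sq Finset.univ (x s) v
      have h2 : ∑ j, v j ^ 2 = 1 := by
        have := hv1
        simpa [dotProduct, sq] using this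
      calc (x s ⬝ᵥ v) ^ 2 ≤ (∑ j, (x s j) ^ 2) * (∑ j, v j ^ 2) := h1
        _ ≤ 1 := by rw [h2, mul_one]; exact hx s
    have hsum : ∑ s : Fin K, (x s ⬝ᵥ v) ^ 2 ≤ (K : ℝ) := by
      calc ∑ s : Fin K, (x s ⬝ᵥ v) ^ 2 ≤ ∑ _s : Fin K, (1 : ℝ) :=
            Finset.sum_le_sum fun s _ => hCS s
        _ = K := by simp
    rw [← hquad, hexp, hv1, mul_one]
    linarith
  have hdet : (Mmat ε x K).det = ∏ i, hH.eigenvalues i := by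
    rw [hH.det_eq_prod_eigenvalues]
    norm_num
  rw [hdet]
  calc ∏ i, hH.eigenvalues i ≤ ∏ _i : Fin d, (ε + K) :=
        Finset.prod_le_prod (fun i _ => (hpd.eigenvalues_pos i).le) (fun i _ => hle i)
    _ = (ε + K) ^ d := by rw [Finset.prod_const, Finset.card_univ, Fintype.card_fin]

end EPLaux

open EPLaux

/-- Explicit elliptical potential bound: if `‖x_k‖₂ ≤ 1` for all `k`, then with
`Σ_k = ε I + ∑_{s<k} x_s x_sᵀ` and `D(ε) = 2 d log((ε + K)/ε)`,
`∑_k min {1, x_kᵀ Σ_k⁻¹ x_k} ≤ D(ε)`. -/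
theorem stmt_14 (d K : ℕ) (hd : 1 ≤ d) (hK : 1 ≤ K) (ε : ℝ) (hε : 0 < ε)
    (x : Fin K → Fin d → ℝ)
    (hx : ∀ k, Real.sqrt (∑ j, (x k j) ^ 2) ≤ 1) :
    (∑ k : Fin K,
        min 1 (x k ⬝ᵥ ((ε • (1 : Matrix (Fin d) (Fin d) ℝ)
          + ∑ s ∈ Finset.univ.filter (fun s : Fin K => s < k),
              vecMulVec (x s) (x s))⁻¹ *ᵥ x k)))
      ≤ 2 * d * Real.log ((ε + K) / ε) := by
  have hx' : ∀ k, ∑ j, (x k j) ^ 2 ≤ 1 := by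
    intro k
    have h1 := hx k
    have h2 : (0:ℝ) ≤ ∑ j, (x k j) ^ 2 := Finset.sum_nonneg fun j _ => sq_nonneg _
    nlinarith [Real.sq_sqrt h2, Real.sqrt_nonneg (∑ j, (x k j) ^ 2)]
  have hM : ∀ k : Fin K, (ε • (1 : Matrix (Fin d) (Fin d) ℝ)
      + ∑ s ∈ Finset.univ.filter (fun s : Fin K => s < k), vecMulVec (x s) (x s))
      = Mmat ε x (k : ℕ) := by
    intro k
    unfold Mmat
    congr 1
  have hfilter : Finset.univ.filter (fun s : Fin K => (s : ℕ) < K) = Finset.univ :=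
    Finset.filter_true_of_mem fun s _ => s.isLt
  have htel := log_det_Mmat ε hε x K le_rfl
  rw [hfilter] at htel
  have hKpos : (0:ℝ) < ε + K := by positivity
  have hdet_le : Real.log (Mmat ε x K).det ≤ d * Real.log (ε + K) := by
    rw [← Real.log_pow]
    exact Real.log_le_log (Mmat_posDef ε hε x K).det_pos (det_Mmat_le ε hε x hx')
  calc (∑ k : Fin K,
        min 1 (x k ⬝ᵥ ((ε • (1 : Matrix (Fin d) (Fin d) ℝ)
          + ∑ s ∈ Finset.univ.filter (fun s : Fin K => s < k),
              vecMulVec (x s) (x s))⁻¹ *ᵥ x k)))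
      = ∑ k : Fin K, min 1 (x k ⬝ᵥ (Mmat ε x (k : ℕ))⁻¹ *ᵥ x k) := by
        refine Finset.sum_congr rfl fun k _ => ?_
        rw [hM k]
    _ ≤ ∑ k : Fin K, 2 * Real.log (1 + x k ⬝ᵥ (Mmat ε x (k : ℕ))⁻¹ *ᵥ x k) :=
        Finset.sum_le_sum fun k _ => min_one_le_two_log _ (q_nonneg ε hε x k)
    _ = 2 * ∑ k : Fin K, Real.log (1 + x k ⬝ᵥ (Mmat ε x (k : ℕ))⁻¹ *ᵥ x k) := by
        rw [Finset.mul_sum]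
    _ = 2 * (Real.log (Mmat ε x K).det - d * Real.log ε) := by rw [htel]; ring
    _ ≤ 2 * (d * Real.log (ε + K) - d * Real.log ε) := by linarith
    _ = 2 * d * Real.log ((ε + K) / ε) := by
        rw [Real.log_div hKpos.ne' hε.ne']
        ring
end
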